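/- Let P_X and P_Y be projection matrices of two distinct s-dimensional subspaces of ℝ^N. If a symmetric matrix Φ commutes with both P_X and P_Y, then max(‖Φ − P_X‖_F, ‖Φ − P_Y‖_F) ≥ 1/√2. -/

import Mathlib

/-!
`E = P_X - P_Y` is symmetric, nonzero, and has trace zero because the ranks agree, so it has
eigenvalues of both signs. As `Φ` commutes with `E`, this gives orthonormal vectors `u`, `w` that
are eigenvectors of `Φ` and eigenvectors of `E` with nonzero eigenvalues. Since
`S = P_X + P_Y - 1` anticommutes with `E`, `⟪u, S u⟫ = 0`, i.e. `⟪u, P_X u⟫ + ⟪u, P_Y u⟫ = 1`;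
with `Φ u = μ u` this gives `‖(Φ - P_X) u‖² + ‖(Φ - P_Y) u‖² = 2 (μ - 1/2)² + 1/2`, and likewise
for `w`. Bessel's inequality for `u`, `w` then gives `‖Φ - P_X‖_F² + ‖Φ - P_Y‖_F² ≥ 1`.
-/

open Matrix

noncomputable def frobNorm {n m : ℕ} (A : Matrix (Fin n) (Fin m) ℝ) : ℝ :=
  Real.sqrt ((Aᵀ * A).trace)

theorem IsIdempotentElem.sub_mul_add_sub_one {R : Type*} [Ring R] {p q : R}
    (hp : IsIdempotentElem p) (hq : IsIdempotentElem q) :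
    (p - q) * (p + q - 1) = -((p + q - 1) * (p - q)) := by
  simp only [sub_mul, mul_sub, add_mul, mul_add, hp.eq, hq.eq, one_mul, mul_one]
  abel

namespace Matrix

variable {m n : Type*} [Fintype m] [Fintype n]

section CommRing

variable {R : Type*} [CommRing R]

theorem IsSymm.mulVec_dotProduct {A : Matrix n n R} (hA : A.IsSymm) (x y : n → R) :
    A *ᵥ x ⬝ᵥ y = x ⬝ᵥ A *ᵥ y := by
  rw [dotProduct_mulVec, ← mulVec_transpose, hA.eq]

theorem IsSymm.mulVec_dotProduct_mulVec_self_of_isIdempotentElem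
    {P : Matrix n n R} (hP : P.IsSymm) (hP2 : IsIdempotentElem P) (x : n → R) :
    P *ᵥ x ⬝ᵥ P *ᵥ x = x ⬝ᵥ P *ᵥ x := by
  rw [hP.mulVec_dotProduct, mulVec_mulVec, hP2.eq]

end CommRing

section Field

variable {K : Type*} [Field K]

theorem trace_eq_rank_of_isIdempotentElem [DecidableEq n] {P : Matrix n n K}
    (hP : IsIdempotentElem P) : P.trace = P.rank := by
  have hP' : IsIdempotentElem (toLin' P) := hP.map toLinAlgEquiv'
  rw [← trace_toLin'_eq, (LinearMap.IsIdempotentElem.isProj_range _ hP').trace, rank,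
    toLin'_apply']

theorem IsSymm.dotProduct_eq_zero_of_mulVec_eq_smul {E : Matrix n n K} (hE : E.IsSymm)
    {u w : n → K} {a b : K} (hu : E *ᵥ u = a • u) (hw : E *ᵥ w = b • w) (hab : a ≠ b) :
    u ⬝ᵥ w = 0 := by
  have h := hE.mulVec_dotProduct u w
  rw [hu, hw, smul_dotProduct, dotProduct_smul, smul_eq_mul, smul_eq_mul] at h
  have h2 : (a - b) * (u ⬝ᵥ w) = 0 := by linear_combination h
  exact (mul_eq_zero.mp h2).resolve_left (sub_ne_zero.mpr hab)

theorem IsSymm.dotProduct_mulVec_eq_zero_of_anticomm [CharZero K] {E S : Matrix n n K}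
    (hE : E.IsSymm) (hES : E * S = -(S * E)) {u : n → K} {l : K} (hu : E *ᵥ u = l • u)
    (hl : l ≠ 0) : u ⬝ᵥ S *ᵥ u = 0 := by
  have h := hE.mulVec_dotProduct u (S *ᵥ u)
  rw [mulVec_mulVec, hES, neg_mulVec, ← mulVec_mulVec, hu, mulVec_smul, dotProduct_neg,
    smul_dotProduct, dotProduct_smul, smul_eq_mul] at h
  have h2 : (2 * l) * (u ⬝ᵥ S *ᵥ u) = 0 := by linear_combination h
  exact (mul_eq_zero.mp h2).resolve_left (mul_ne_zero two_ne_zero hl)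

theorem dotProduct_mulVec_add_dotProduct_mulVec_eq_one [CharZero K] [DecidableEq n]
    {P Q : Matrix n n K} (hP : IsIdempotentElem P) (hQ : IsIdempotentElem Q)
    (hPQ : (P - Q).IsSymm) {u : n → K} {l : K} (hu : u ⬝ᵥ u = 1)
    (hEu : (P - Q) *ᵥ u = l • u) (hl : l ≠ 0) :
    u ⬝ᵥ P *ᵥ u + u ⬝ᵥ Q *ᵥ u = 1 := by
  have h := hPQ.dotProduct_mulVec_eq_zero_of_anticomm (hP.sub_mul_add_sub_one hQ) hEu hl
  rw [sub_mulVec, add_mulVec, one_mulVec, dotProduct_sub, dotProduct_add, hu] at h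
  exact sub_eq_zero.mp h

end Field

section Real

theorem sq_dotProduct_add_sq_dotProduct_le {u w : n → ℝ} (hu : u ⬝ᵥ u = 1) (hw : w ⬝ᵥ w = 1)
    (huw : u ⬝ᵥ w = 0) (x : n → ℝ) : (x ⬝ᵥ u) ^ 2 + (x ⬝ᵥ w) ^ 2 ≤ x ⬝ᵥ x := by
  have h : 0 ≤ (x - (x ⬝ᵥ u) • u - (x ⬝ᵥ w) • w) ⬝ᵥ (x - (x ⬝ᵥ u) • u - (x ⬝ᵥ w) • w) :=
    Finset.sum_nonneg fun i _ => mul_self_nonneg _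
  simp only [sub_dotProduct, dotProduct_sub, smul_dotProduct, dotProduct_smul, smul_eq_mul,
    hu, hw, huw, dotProduct_comm w u, dotProduct_comm u x, dotProduct_comm w x] at h
  nlinarith

theorem mulVec_dotProduct_self_add_le_trace (A : Matrix m n ℝ) {u w : n → ℝ}
    (hu : u ⬝ᵥ u = 1) (hw : w ⬝ᵥ w = 1) (huw : u ⬝ᵥ w = 0) :
    A *ᵥ u ⬝ᵥ A *ᵥ u + A *ᵥ w ⬝ᵥ A *ᵥ w ≤ (Aᵀ * A).trace := by
  have hrows (v : n → ℝ) : A *ᵥ v ⬝ᵥ A *ᵥ v = ∑ i, (A i ⬝ᵥ v) ^ 2 := by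
    simp only [dotProduct, mulVec, sq]
  have htrace : (Aᵀ * A).trace = ∑ i, A i ⬝ᵥ A i := by
    rw [trace_mul_comm]
    simp only [trace, diag, mul_apply', transpose_apply]
  rw [hrows, hrows, htrace, ← Finset.sum_add_distrib]
  exact Finset.sum_le_sum fun i _ => sq_dotProduct_add_sq_dotProduct_le hu hw huw (A i)

theorem one_half_le_sub_mulVec_dotProduct_self_add {P Q Φ : Matrix n n ℝ}
    (hP : P.IsSymm) (hP2 : IsIdempotentElem P) (hQ : Q.IsSymm) (hQ2 : IsIdempotentElem Q)
    {u : n → ℝ} {μ : ℝ} (hu : u ⬝ᵥ u = 1) (hΦu : Φ *ᵥ u = μ • u)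
    (hPQu : u ⬝ᵥ P *ᵥ u + u ⬝ᵥ Q *ᵥ u = 1) :
    1 / 2 ≤ (Φ - P) *ᵥ u ⬝ᵥ (Φ - P) *ᵥ u + (Φ - Q) *ᵥ u ⬝ᵥ (Φ - Q) *ᵥ u := by
  simp only [sub_mulVec, hΦu, sub_dotProduct, dotProduct_sub, smul_dotProduct, dotProduct_smul,
    smul_eq_mul, hu, hP.mulVec_dotProduct_mulVec_self_of_isIdempotentElem hP2,
    hQ.mulVec_dotProduct_mulVec_self_of_isIdempotentElem hQ2, dotProduct_comm (P *ᵥ u) u,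
    dotProduct_comm (Q *ᵥ u) u]
  linear_combination (1 / 2) * sq_nonneg (2 * μ - 1) + (2 * μ - 1) * hPQu

theorem IsHermitian.exists_pos_eigenvector_of_trace_eq_zero [DecidableEq n]
    {A : Matrix n n ℝ} (hA : A.IsHermitian) (htr : A.trace = 0) (hA0 : A ≠ 0) :
    ∃ (l : ℝ) (v : n → ℝ), 0 < l ∧ v ≠ 0 ∧ A *ᵥ v = l • v := by
  have hsum : ∑ i, hA.eigenvalues i = 0 := by
    simpa [hA.trace_eq_sum_eigenvalues] using htr
  obtain ⟨i, hi⟩ := Function.ne_iff.mp (mt hA.eigenvalues_eq_zero_iff.mp hA0)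
  obtain ⟨j, -, hj⟩ := Finset.exists_pos_of_sum_zero_of_exists_nonzero _ hsum
    ⟨i, Finset.mem_univ i, hi⟩
  exact ⟨_, _, hj, (WithLp.ofLp_eq_zero 2).ne.2 <| hA.eigenvectorBasis.orthonormal.ne_zero j,
    hA.mulVec_eigenvectorBasis j⟩

theorem IsHermitian.exists_unit_joint_eigenvector_of_commute [DecidableEq n]
    {E Φ : Matrix n n ℝ} (hΦ : Φ.IsHermitian) (hEΦ : Commute E Φ) {l : ℝ} {v : n → ℝ} (hv : v ≠ 0)
    (hEv : E *ᵥ v = l • v) :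
    ∃ (u : n → ℝ) (μ : ℝ), u ⬝ᵥ u = 1 ∧ E *ᵥ u = l • u ∧ Φ *ᵥ u = μ • u := by
  open Module.End in
  set A := toEuclideanLin E
  set B := toEuclideanLin Φ
  have hAB : Commute A B := by
    simp only [Commute, SemiconjBy, A, B, Module.End.mul_eq_comp, ← toLpLin_mul_same, hEΦ.eq]
  have hne : eigenspace A l ≠ ⊥ := by
    rw [Submodule.ne_bot_iff]
    exact ⟨WithLp.toLp 2 v, mem_eigenspace_iff.mpr (by simp [A, toLpLin_apply, hEv]),
      by simpa using hv⟩
  obtain ⟨μ, hμ⟩ : ∃ μ, eigenspace A l ⊓ eigenspace B μ ≠ ⊥ := by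
    by_contra! h
    apply hne
    rw [← LinearMap.IsSymmetric.iSup_eigenspace_inf_eigenspace_of_commute
      (isSymmetric_toEuclideanLin_iff.mpr hΦ) hAB]
    exact iSup_eq_bot.mpr h
  obtain ⟨x, hx, hx0⟩ := Submodule.exists_mem_ne_zero_of_ne_bot hμ
  set y := ‖x‖⁻¹ • x
  have hy : y ∈ eigenspace A l ⊓ eigenspace B μ := Submodule.smul_mem _ _ hx
  refine ⟨WithLp.ofLp y, μ, ?_, ?_, ?_⟩
  · have hy1 : ‖y‖ = 1 := by simp [y, norm_smul, hx0]
    have h := real_inner_self_eq_norm_sq y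
    rwa [hy1, EuclideanSpace.inner_eq_star_dotProduct, star_trivial, one_pow] at h
  · simpa [A, toLpLin_apply] using congrArg WithLp.ofLp (mem_eigenspace_iff.mp hy.1)
  · simpa [B, toLpLin_apply] using congrArg WithLp.ofLp (mem_eigenspace_iff.mp hy.2)

theorem one_le_trace_sub_add_trace_sub_of_commute [DecidableEq n] {P Q Φ : Matrix n n ℝ}
    (hP : P.IsSymm) (hP2 : IsIdempotentElem P) (hQ : Q.IsSymm) (hQ2 : IsIdempotentElem Q)
    (htr : P.trace = Q.trace) (hPQ : P ≠ Q) (hΦ : Φ.IsSymm) (hΦP : Commute Φ P)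
    (hΦQ : Commute Φ Q) :
    1 ≤ ((Φ - P)ᵀ * (Φ - P)).trace + ((Φ - Q)ᵀ * (Φ - Q)).trace := by
  have hE : (P - Q).IsHermitian := isHermitian_iff_isSymm.mpr (hP.sub hQ)
  have hEΦ : Commute (P - Q) Φ := (hΦP.sub_right hΦQ).symm
  have hEtr : (P - Q).trace = 0 := by rw [trace_sub, htr, sub_self]
  have hE0 : P - Q ≠ 0 := sub_ne_zero.mpr hPQ
  obtain ⟨a, v, ha, hv, hEv⟩ := hE.exists_pos_eigenvector_of_trace_eq_zero hEtr hE0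
  obtain ⟨b, v', hb, hv', hEv'⟩ := hE.neg.exists_pos_eigenvector_of_trace_eq_zero
    (by rw [trace_neg, hEtr, neg_zero]) (neg_ne_zero.mpr hE0)
  rw [neg_mulVec, neg_eq_iff_eq_neg, ← neg_smul] at hEv'
  have hΦ' : Φ.IsHermitian := isHermitian_iff_isSymm.mpr hΦ
  obtain ⟨u, μ, hu, hEu, hΦu⟩ := hΦ'.exists_unit_joint_eigenvector_of_commute hEΦ hv hEv
  obtain ⟨w, ν, hw, hEw, hΦw⟩ := hΦ'.exists_unit_joint_eigenvector_of_commute hEΦ hv' hEv'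
  have huw : u ⬝ᵥ w = 0 :=
    (hP.sub hQ).dotProduct_eq_zero_of_mulVec_eq_smul hEu hEw (by linarith)
  have hu_half := one_half_le_sub_mulVec_dotProduct_self_add hP hP2 hQ hQ2 hu hΦu
    (dotProduct_mulVec_add_dotProduct_mulVec_eq_one hP2 hQ2 (hP.sub hQ) hu hEu ha.ne')
  have hw_half := one_half_le_sub_mulVec_dotProduct_self_add hP hP2 hQ hQ2 hw hΦw
    (dotProduct_mulVec_add_dotProduct_mulVec_eq_one hP2 hQ2 (hP.sub hQ) hw hEw (by linarith))
  linarith [mulVec_dotProduct_self_add_le_trace (Φ - P) hu hw huw,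
    mulVec_dotProduct_self_add_le_trace (Φ - Q) hu hw huw]

end Real

end Matrix

theorem Real.one_div_sqrt_two_le_max_sqrt {a b : ℝ} (h : 1 ≤ a + b) : 1 / √2 ≤ max √a √b := by
  rw [one_div, ← Real.sqrt_inv]
  rcases le_total a b with hab | hab
  · exact le_max_of_le_right (Real.sqrt_le_sqrt (by linarith))
  · exact le_max_of_le_left (Real.sqrt_le_sqrt (by linarith))

theorem stmt13 {N s : ℕ} (PX PY Φ : Matrix (Fin N) (Fin N) ℝ)
    (hPX : PXᵀ = PX) (hPX2 : PX * PX = PX) (hrX : PX.rank = s)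
    (hPY : PYᵀ = PY) (hPY2 : PY * PY = PY) (hrY : PY.rank = s)
    (hne : PX ≠ PY)
    (hΦ : Φᵀ = Φ) (hc1 : Φ * PX = PX * Φ) (hc2 : Φ * PY = PY * Φ) :
    1 / Real.sqrt 2 ≤ max (frobNorm (Φ - PX)) (frobNorm (Φ - PY)) := by
  have htr : PX.trace = PY.trace := by
    rw [trace_eq_rank_of_isIdempotentElem hPX2, trace_eq_rank_of_isIdempotentElem hPY2, hrX, hrY]
  exact Real.one_div_sqrt_two_le_max_sqrt
    (one_le_trace_sub_add_trace_sub_of_commute hPX hPX2 hPY hPY2 htr hne hΦ hc1 hc2)
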